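/- Let a ∈ ℤ and define g_a(k) := max(a − k, 0, k − a − 1) for k ∈ ℤ and G_a(x) := Σ_{s∈S} g_a(x(s)) for x ∈ ℤ^S. An element z of an M-convex set B ∩ ℤ^S is a minimizer of G_a over B ∩ ℤ^S if and only if for all s, t ∈ S: z(s) ≤ a, z(t) ≥ a+1 and z(t) ≥ z(s)+2 imply z + χ_s − χ_t ∉ B ∩ ℤ^S. -/

import Mathlib

open Finset

variable {α : Type*} [Fintype α] [DecidableEq α]

def Supermodular (p : Finset α → EReal) : Prop :=
  ∀ X Y : Finset α, p X + p Y ≤ p (X ∩ Y) + p (X ∪ Y)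

/-- `p` takes values in `ℤ ∪ {−∞}`. -/
def IntegerValued (p : Finset α → EReal) : Prop :=
  ∀ X : Finset α, p X = ⊥ ∨ ∃ n : ℤ, p X = ((n : ℝ) : EReal)

/-- `x` belongs to the base-polyhedron `B'(p)`:
`x(S) = p(S)` and `x(Z) ≥ p(Z)` for every `Z ⊆ S`. -/
def memB (p : Finset α → EReal) (x : α → ℝ) : Prop :=
  ((∑ s, x s : ℝ) : EReal) = p Finset.univ ∧
    ∀ Z : Finset α, p Z ≤ ((∑ s ∈ Z, x s : ℝ) : EReal)

/-- `x` is an integral element of the base-polyhedron `B'(p)` (a member of the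
M-convex set `B ∩ ℤ^S`). -/
def memBZ (p : Finset α → EReal) (x : α → ℤ) : Prop :=
  ((((∑ s, x s : ℤ) : ℝ)) : EReal) = p Finset.univ ∧
    ∀ Z : Finset α, p Z ≤ ((((∑ s ∈ Z, x s : ℤ) : ℝ)) : EReal)

/-- Lexicographic comparison `l1 ≤_lex l2` of lists. -/
def lexLE {β : Type*} [LT β] (l1 l2 : List β) : Prop :=
  l1 = l2 ∨ List.Lex (· < ·) l1 l2

/-- The components of `x` sorted in decreasing order. -/
noncomputable def sortDescR (x : α → ℝ) : List ℝ :=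
  (Multiset.sort (Finset.univ.val.map x) (· ≤ ·)).reverse

/-- The components of the integral vector `x` sorted in decreasing order. -/
def sortDescZ (x : α → ℤ) : List ℤ :=
  (Multiset.sort (Finset.univ.val.map x) (· ≤ ·)).reverse

/-- `m` is a decreasingly minimal element of the base-polyhedron `B'(p)`. -/
def DecMinR (p : Finset α → EReal) (m : α → ℝ) : Prop :=
  memB p m ∧ ∀ y : α → ℝ, memB p y → lexLE (sortDescR m) (sortDescR y)

/-- `m` is a decreasingly minimal element of the M-convex set `B'(p) ∩ ℤ^S`. -/
def DecMinZ (p : Finset α → EReal) (m : α → ℤ) : Prop :=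
  memBZ p m ∧ ∀ y : α → ℤ, memBZ p y → lexLE (sortDescZ m) (sortDescZ y)

/-- The vector `z + χ_s − χ_t`. -/
def move (z : α → ℤ) (s t : α) : α → ℤ :=
  fun u => z u + (if u = s then 1 else 0) - (if u = t then 1 else 0)

/-- `g_a(k) = max(a − k, 0, k − a − 1)`. -/
def ga (a k : ℤ) : ℤ := max (a - k) (max 0 (k - a - 1))

/-- `G_a(x) = Σ_{s∈S} g_a(x(s))`. -/
def Ga (a : ℤ) (x : α → ℤ) : ℤ := ∑ s, ga a (x s)

/-!
The function `g_a` is discrete convex, and a single exchange `z + χ_s − χ_t` lowers `G_a` exactly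
when `z(s) ≤ a`, `z(t) ≥ a + 1` and `z(t) ≥ z(s) + 2`; so the condition says that `z` is locally
optimal, and it remains to see that local optimality is global for separable convex objectives.
Given `y ∈ B` with `y(s) < z(s)`, the tight sets of the supermodular `p` yield the simultaneous
exchange: some `t` with `z(t) < y(t)` has both `z + χ_t − χ_s` and `y + χ_s − χ_t` in `B`. By
convexity the second move does not increase the objective at `y` as long as the first does not
decrease it at `z`, and it brings `y` closer to `z` in `ℓ¹`, so induction on `‖y − z‖₁` finishes.
-/

lemma ga_slope_monotone (a : ℤ) : Monotone fun k => ga a (k + 1) - ga a k := by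
  intro k l hkl
  simp only [ga, max_def]
  split_ifs <;> omega

lemma ga_add_one_add_ga_sub_one_lt_iff (a b c : ℤ) :
    ga a (b + 1) + ga a (c - 1) < ga a b + ga a c ↔ b ≤ a ∧ a + 1 ≤ c ∧ b + 2 ≤ c := by
  simp only [ga, max_def]
  split_ifs <;> omega

lemma EReal.eq_coe_of_le_of_coe_add_coe_le {a b : EReal} {x y : ℝ} (ha : a ≤ x) (hb : b ≤ y)
    (h : (x : EReal) + y ≤ a + b) : a = x ∧ b = y := by
  induction a using EReal.rec with
  | bot => simp at h
  | top => simp at ha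
  | coe a =>
    induction b using EReal.rec with
    | bot => simp at h
    | top => simp at hb
    | coe b =>
      norm_cast at ha hb h ⊢
      constructor <;> linarith

lemma EReal.le_intCast_sub_one_of_le_of_ne {e : EReal}
    (he : e = ⊥ ∨ ∃ m : ℤ, e = ((m : ℝ) : EReal)) {n : ℤ} (hle : e ≤ ((n : ℝ) : EReal))
    (hne : e ≠ ((n : ℝ) : EReal)) :
    e ≤ (((n - 1 : ℤ) : ℝ) : EReal) := by
  obtain rfl | ⟨m, rfl⟩ := he
  · exact bot_le
  · have : m < n := by exact_mod_cast lt_of_le_of_ne hle hne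
    exact_mod_cast Int.le_sub_one_of_lt this

omit [Fintype α] in
lemma move_self (x : α → ℤ) (s : α) : move x s s = x := by
  ext u
  simp only [move]
  ring

omit [Fintype α] in
lemma sum_move (x : α → ℤ) (s t : α) (Z : Finset α) :
    ∑ u ∈ Z, move x s t u
      = ∑ u ∈ Z, x u + (if s ∈ Z then 1 else 0) - (if t ∈ Z then 1 else 0) := by
  simp only [move, sum_sub_distrib, sum_add_distrib,
    sum_ite_eq' Z s (fun _ => (1 : ℤ)), sum_ite_eq' Z t (fun _ => (1 : ℤ))]

lemma sum_comp_move (f : α → ℤ → ℤ) (x : α → ℤ) {s t : α} (hst : s ≠ t) :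
    ∑ u, f u (move x s t u)
      = ∑ u, f u (x u) + (f s (x s + 1) - f s (x s)) + (f t (x t - 1) - f t (x t)) := by
  have h : ∀ u, f u (move x s t u) = f u (x u)
      + ((if u = s then f s (x s + 1) - f s (x s) else 0)
        + (if u = t then f t (x t - 1) - f t (x t) else 0)) := by
    intro u
    by_cases hus : u = s
    · subst hus
      simp [move, hst]
    · by_cases hut : u = t
      · subst hut
        simp [move, hus]
      · simp [move, hus, hut]
  simp only [h, sum_add_distrib, sum_ite_eq', mem_univ, if_true]
  ring

lemma Ga_move (a : ℤ) (x : α → ℤ) {s t : α} (hst : s ≠ t) :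
    Ga a (move x s t)
      = Ga a x + (ga a (x s + 1) - ga a (x s)) + (ga a (x t - 1) - ga a (x t)) :=
  sum_comp_move (fun _ => ga a) x hst

def IsTight (p : Finset α → EReal) (x : α → ℤ) (Z : Finset α) : Prop :=
  p Z = ((((∑ s ∈ Z, x s : ℤ) : ℝ)) : EReal)

section Tight

variable {p : Finset α → EReal} {x : α → ℤ}

omit [DecidableEq α] in
lemma isTight_univ (hx : memBZ p x) : IsTight p x univ := hx.1.symm

omit [Fintype α] [DecidableEq α] in
lemma isTight_empty (hp0 : p ∅ = 0) : IsTight p x ∅ := by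
  simp [IsTight, hp0]

lemma IsTight.inter_union (hsup : Supermodular p) (hx : memBZ p x) {X Y : Finset α}
    (hX : IsTight p x X) (hY : IsTight p x Y) : IsTight p x (X ∩ Y) ∧ IsTight p x (X ∪ Y) := by
  have hsum : ∑ u ∈ X, x u + ∑ u ∈ Y, x u = ∑ u ∈ X ∩ Y, x u + ∑ u ∈ X ∪ Y, x u := by
    rw [add_comm (∑ u ∈ X ∩ Y, x u), sum_union_inter]
  have h := hsup X Y
  rw [hX, hY, ← EReal.coe_add, ← Int.cast_add, hsum, Int.cast_add, EReal.coe_add] at h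
  exact EReal.eq_coe_of_le_of_coe_add_coe_le (hx.2 _) (hx.2 _) h

lemma exists_isTight_minimal (hsup : Supermodular p) (hx : memBZ p x) (s : α) :
    ∃ T, IsTight p x T ∧ s ∈ T ∧ ∀ Z, IsTight p x Z → s ∈ Z → T ⊆ Z := by
  classical
  set F : Finset (Finset α) := {Z | IsTight p x Z ∧ s ∈ Z}
  obtain ⟨hT, hsT⟩ : IsTight p x (F.inf id) ∧ s ∈ F.inf id :=
    inf_induction (p := fun Z => IsTight p x Z ∧ s ∈ Z) ⟨isTight_univ hx, mem_univ s⟩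
      (fun X hX Y hY => ⟨(hX.1.inter_union hsup hx hY.1).1, mem_inter.2 ⟨hX.2, hY.2⟩⟩)
      (fun Z hZ => (mem_filter.1 hZ).2)
  exact ⟨F.inf id, hT, hsT, fun Z hZ hsZ => inf_le (f := id) (by simp [F, hZ, hsZ])⟩

lemma exists_isTight_maximal (hp0 : p ∅ = 0) (hsup : Supermodular p) (hx : memBZ p x) (s : α) :
    ∃ U, IsTight p x U ∧ s ∉ U ∧ ∀ Z, IsTight p x Z → s ∉ Z → Z ⊆ U := by
  classical
  set F : Finset (Finset α) := {Z | IsTight p x Z ∧ s ∉ Z}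
  obtain ⟨hU, hsU⟩ : IsTight p x (F.sup id) ∧ s ∉ F.sup id :=
    sup_induction (p := fun Z => IsTight p x Z ∧ s ∉ Z) ⟨isTight_empty hp0, notMem_empty s⟩
      (fun X hX Y hY => ⟨(hX.1.inter_union hsup hx hY.1).2, by simp [hX.2, hY.2]⟩)
      (fun Z hZ => (mem_filter.1 hZ).2)
  exact ⟨F.sup id, hU, hsU, fun Z hZ hsZ => le_sup (f := id) (by simp [F, hZ, hsZ])⟩

lemma memBZ_move (hint : IntegerValued p) (hx : memBZ p x) {s t : α}
    (h : ∀ Z, IsTight p x Z → t ∈ Z → s ∈ Z) : memBZ p (move x s t) := by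
  refine ⟨by simpa [sum_move] using hx.1, fun Z => ?_⟩
  rw [sum_move]
  by_cases htZ : t ∈ Z
  · by_cases hsZ : s ∈ Z
    · simpa [htZ, hsZ] using hx.2 Z
    · have hne : p Z ≠ ((((∑ u ∈ Z, x u : ℤ) : ℝ)) : EReal) := fun hZ => hsZ (h Z hZ htZ)
      simpa [htZ, hsZ] using EReal.le_intCast_sub_one_of_le_of_ne (hint Z) (hx.2 Z) hne
  · have : ∑ u ∈ Z, x u
        ≤ ∑ u ∈ Z, x u + (if s ∈ Z then 1 else 0) - (if t ∈ Z then 1 else 0) := by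
      split_ifs <;> omega
    exact (hx.2 Z).trans (by exact_mod_cast this)

end Tight

lemma sum_natAbs_move_sub_lt (y z : α → ℤ) {s t : α} (hs : y s < z s) (ht : z t < y t) :
    ∑ u, (move y s t u - z u).natAbs < ∑ u, (y u - z u).natAbs := by
  refine sum_lt_sum (fun u _ => ?_) ⟨s, mem_univ s, ?_⟩ <;>
  · simp only [move]
    split_ifs <;> subst_vars <;> omega

section Exchange

variable {p : Finset α → EReal} {y z : α → ℤ}

omit [DecidableEq α] in
lemma memBZ.sum_eq (hy : memBZ p y) (hz : memBZ p z) : ∑ u, y u = ∑ u, z u := by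
  have h := hy.1.trans hz.1.symm
  exact_mod_cast h

omit [DecidableEq α] in
lemma memBZ.exists_lt_of_ne (hy : memBZ p y) (hz : memBZ p z) (hyz : y ≠ z) : ∃ s, y s < z s := by
  by_contra! h
  refine hyz (funext fun u => ?_)
  exact ((sum_eq_sum_iff_of_le fun u _ => h u).1 (hz.sum_eq hy) u (mem_univ u)).symm

lemma memBZ.exists_exchange (hp0 : p ∅ = 0) (hsup : Supermodular p) (hint : IntegerValued p)
    (hz : memBZ p z) (hy : memBZ p y) {s : α} (hs : y s < z s) :
    ∃ t, z t < y t ∧ memBZ p (move z t s) ∧ memBZ p (move y s t) := by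
  obtain ⟨T, hT, hsT, hTmin⟩ := exists_isTight_minimal hsup hz s
  obtain ⟨U, hU, hsU, hUmax⟩ := exists_isTight_maximal hp0 hsup hy s
  -- Every `t ∈ T \ U` admits both moves; supermodularity on `T, U` finds one with `z t < y t`.
  have hcross : ∑ u ∈ T \ U, z u ≤ ∑ u ∈ T \ U, y u := by
    have h := (hsup T U).trans (add_le_add (hz.2 (T ∩ U)) (hy.2 (T ∪ U)))
    rw [hT, hU] at h
    have h' : ∑ u ∈ T, z u + ∑ u ∈ U, y u ≤ ∑ u ∈ T ∩ U, z u + ∑ u ∈ T ∪ U, y u := by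
      exact_mod_cast h
    rw [← sum_inter_add_sum_sdiff T U z, ← sum_sdiff (subset_union_right (s₁ := T)),
      union_sdiff_right] at h'
    linarith
  obtain ⟨t, htTU, hzt⟩ : ∃ t ∈ T \ U, z t < y t := by
    by_contra! h
    exact hcross.not_gt (sum_lt_sum h ⟨s, mem_sdiff.2 ⟨hsT, hsU⟩, hs⟩)
  obtain ⟨htT, htU⟩ := mem_sdiff.1 htTU
  exact ⟨t, hzt, memBZ_move hint hz fun Z hZ hsZ => hTmin Z hZ hsZ htT,
    memBZ_move hint hy fun Z hZ htZ => by_contra fun hsZ => htU (hUmax Z hZ hsZ htZ)⟩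

end Exchange

theorem sum_le_sum_of_forall_move (p : Finset α → EReal) (hp0 : p ∅ = 0) (hsup : Supermodular p)
    (hint : IntegerValued p) (f : α → ℤ → ℤ) (hf : ∀ u, Monotone fun k => f u (k + 1) - f u k)
    {z : α → ℤ} (hz : memBZ p z)
    (hloc : ∀ s t, memBZ p (move z s t) → ∑ u, f u (z u) ≤ ∑ u, f u (move z s t u))
    {y : α → ℤ} (hy : memBZ p y) : ∑ u, f u (z u) ≤ ∑ u, f u (y u) := by
  induction hd : ∑ u, (y u - z u).natAbs using Nat.strong_induction_on generalizing y with
  | _ n ih =>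
  obtain rfl | hyz := eq_or_ne y z
  · rfl
  obtain ⟨s, hs⟩ := hy.exists_lt_of_ne hz hyz
  obtain ⟨t, hzt, hz', hy'⟩ := hz.exists_exchange hp0 hsup hint hy hs
  have hst : s ≠ t := by rintro rfl; omega
  have hstep : ∑ u, f u (move y s t u) ≤ ∑ u, f u (y u) := by
    have hslope_s := hf s (show y s ≤ z s - 1 by omega)
    have hslope_t := hf t (show z t ≤ y t - 1 by omega)
    have hz_opt := hloc t s hz'
    simp only [sub_add_cancel] at hslope_s hslope_t
    rw [sum_comp_move f z hst.symm] at hz_opt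
    rw [sum_comp_move f y hst]
    linarith
  exact (ih _ (hd ▸ sum_natAbs_move_sub_lt y z hs hzt) hy' rfl).trans hstep

theorem Ga_minimizer_iff_relaxed_exchange_general (p : Finset α → EReal) (hp0 : p ∅ = 0)
    (hsup : Supermodular p)
    (hint : IntegerValued p) (a : ℤ) (z : α → ℤ) (hz : memBZ p z) :
    (∀ y : α → ℤ, memBZ p y → Ga a z ≤ Ga a y) ↔
      (∀ s t : α, z s ≤ a → a + 1 ≤ z t → z s + 2 ≤ z t → ¬ memBZ p (move z s t)) := by
  constructor
  · intro hmin s t hsa hta hst hmem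
    have hne : s ≠ t := by rintro rfl; omega
    have hle := hmin _ hmem
    have hlt := (ga_add_one_add_ga_sub_one_lt_iff a (z s) (z t)).2 ⟨hsa, hta, hst⟩
    rw [Ga_move a z hne] at hle
    omega
  · intro hloc y hy
    refine sum_le_sum_of_forall_move p hp0 hsup hint (fun _ => ga a)
      (fun _ => ga_slope_monotone a) hz (fun s t hmem => ?_) hy
    obtain rfl | hne := eq_or_ne s t
    · rw [move_self]
    have hnlt := mt (ga_add_one_add_ga_sub_one_lt_iff a (z s) (z t)).1
      fun ⟨hsa, hta, hst⟩ => hloc s t hsa hta hst hmem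
    show Ga a z ≤ Ga a (move z s t)
    rw [Ga_move a z hne]
    omega

/-- `z ∈ B ∩ ℤ^S` minimizes `G_a` over `B ∩ ℤ^S` iff for all `s, t`:
`z(s) ≤ a`, `z(t) ≥ a+1`, `z(t) ≥ z(s)+2` imply `z + χ_s − χ_t ∉ B ∩ ℤ^S`. -/
theorem Ga_minimizer_iff_relaxed_exchange (p : Finset α → EReal) (hp0 : p ∅ = 0)
    (hfin : p (Finset.univ : Finset α) ≠ ⊥) (hsup : Supermodular p)
    (hint : IntegerValued p) (a : ℤ) (z : α → ℤ) (hz : memBZ p z) :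
    (∀ y : α → ℤ, memBZ p y → Ga a z ≤ Ga a y) ↔
      (∀ s t : α, z s ≤ a → a + 1 ≤ z t → z s + 2 ≤ z t → ¬ memBZ p (move z s t)) :=
  Ga_minimizer_iff_relaxed_exchange_general p hp0 hsup hint a z hz
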